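/- arXiv:2105.04930 — 4 statements merged into one kernel-verified Lean document; each statement's English description precedes it below -/
import Mathlib

section
/- Stabilizing feedback from the Riccati-type equation. Let (Q_j)_{j∈ℕ⁺} ∈ M_{ħ,≫}(H) and (R_j)_{j∈ℕ⁺} ∈ M_{ħ,≫}(U) be such that the periodic Riccati-type equation has a solution {P_k}_{k=0}^{ħ} ⊂ SL_+(H). Define F_k := −(R_k + B_k*P_kB_k)^{−1}B_k*P_k for k = 1,…,ħ. Then there exist constants C > 0 and μ > 0 such that every closed-loop trajectory of [A,B_ħ,Λ_ħ] obtained by taking u_j = F_{ν(j)}x(t_j;x_0,u) for all j ∈ ℕ⁺ satisfies ‖x(t;x_0,u)‖_H ≤ C e^{−μt}‖x_0‖_H for all t > 0 and x_0 ∈ H; in particular the system [A,B_ħ,Λ_ħ] is exponentially ħ-stabilizable with this feedback law. -/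
open scoped RealInnerProductSpace
noncomputable section

namespace ImpulseControl

/-- adjoint of a continuous linear map between real Hilbert spaces -/
def adj {E F : Type*} [NormedAddCommGroup E] [InnerProductSpace ℝ E] [CompleteSpace E]
    [NormedAddCommGroup F] [InnerProductSpace ℝ F] [CompleteSpace F]
    (f : E →L[ℝ] F) : F →L[ℝ] E :=
  ContinuousLinearMap.adjoint f

/-- `ν(j) = j - [j/ħ]·ħ ∈ {1,…,ħ}` (where `[s] = max {k ∈ ℕ : k < s}`):
equals `ħ` when `ħ ∣ j`, else `j % ħ`. -/
def nu (hbar j : ℕ) : ℕ := if j % hbar = 0 then hbar else j % hbar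

variable {H U : Type*} [NormedAddCommGroup H] [InnerProductSpace ℝ H] [CompleteSpace H]
  [NormedAddCommGroup U] [InnerProductSpace ℝ U] [CompleteSpace U]

/-- a bounded self-adjoint nonnegative operator: membership in `SL₊` -/
def IsNonnegOp {E : Type*} [NormedAddCommGroup E] [InnerProductSpace ℝ E] [CompleteSpace E]
    (P : E →L[ℝ] E) : Prop :=
  IsSelfAdjoint P ∧ ∀ x : E, 0 ≤ ⟪P x, x⟫

/-- membership in `SL_≫`: self-adjoint, nonnegative and coercive -/
def IsCoerciveOp {E : Type*} [NormedAddCommGroup E] [InnerProductSpace ℝ E] [CompleteSpace E]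
    (P : E →L[ℝ] E) : Prop :=
  IsNonnegOp P ∧ ∃ δ : ℝ, 0 < δ ∧ ∀ x : E, δ * ‖x‖ ^ 2 ≤ ⟪P x, x⟫

/-- `M_{ħ,+}`: an `ħ`-periodic sequence of self-adjoint nonnegative operators (indices `j ≥ 1`). -/
def MemMPlus {E : Type*} [NormedAddCommGroup E] [InnerProductSpace ℝ E] [CompleteSpace E]
    (hbar : ℕ) (Q : ℕ → E →L[ℝ] E) : Prop :=
  (∀ j : ℕ, 1 ≤ j → IsNonnegOp (Q j)) ∧ ∀ j : ℕ, 1 ≤ j → Q (j + hbar) = Q j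

/-- `M_{ħ,≫}`: an `ħ`-periodic sequence of self-adjoint coercive operators (indices `j ≥ 1`). -/
def MemMCoercive {E : Type*} [NormedAddCommGroup E] [InnerProductSpace ℝ E] [CompleteSpace E]
    (hbar : ℕ) (Q : ℕ → E →L[ℝ] E) : Prop :=
  (∀ j : ℕ, 1 ≤ j → IsCoerciveOp (Q j)) ∧ ∀ j : ℕ, 1 ≤ j → Q (j + hbar) = Q j

section Defs

variable (T : ℝ → H →L[ℝ] H) (t : ℕ → ℝ) (hbar : ℕ) (B : ℕ → U →L[ℝ] H)

/-- post-impulse states: `xplusFrom T t ħ B ℓ x0 u m = x(t_{ℓ+m}^+ ; x0, u, ℓ)`. -/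
def xplusFrom (ℓ : ℕ) (x0 : H) (u : ℕ → U) : ℕ → H
  | 0 => x0
  | m + 1 => T (t (ℓ + m + 1) - t (ℓ + m)) (xplusFrom ℓ x0 u m)
      + B (nu hbar (ℓ + m + 1)) (u (ℓ + m + 1))

/-- pre-impulse states: `xtrajFrom T t ħ B ℓ x0 u m = x(t_{ℓ+m} ; x0, u, ℓ)` for `m ≥ 1`. -/
def xtrajFrom (ℓ : ℕ) (x0 : H) (u : ℕ → U) : ℕ → H
  | 0 => x0
  | m + 1 => T (t (ℓ + m + 1) - t (ℓ + m)) (xplusFrom T t hbar B ℓ x0 u m)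

/-- `x(t_j^+ ; x0, u)` -/
def xplus (x0 : H) (u : ℕ → U) : ℕ → H := xplusFrom T t hbar B 0 x0 u

/-- `x(t_j ; x0, u)` for `j ≥ 1` -/
def xtraj (x0 : H) (u : ℕ → U) : ℕ → H := xtrajFrom T t hbar B 0 x0 u

/-- the shifted admissible control set `U_ad(x0; ℓ)`; `U_ad(x0) = UadFrom T t ħ B 0 x0` -/
def UadFrom (ℓ : ℕ) (x0 : H) : Set (ℕ → U) :=
  {u | Summable (fun j : ℕ => ‖u (ℓ + j + 1)‖ ^ 2) ∧
       Summable (fun j : ℕ => ‖xtrajFrom T t hbar B ℓ x0 u (j + 1)‖ ^ 2)}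

/-- exponential `ħ`-stabilizability of `[A, B_ħ, Λ_ħ]` by an `ħ`-periodic feedback law:
every closed-loop trajectory decays like `C e^{-μ t}`. -/
def ExpStabilizable : Prop :=
  ∃ F : ℕ → H →L[ℝ] U, ∃ C μ : ℝ, 0 < C ∧ 0 < μ ∧
    ∀ (x0 : H) (u : ℕ → U),
      (∀ j : ℕ, 1 ≤ j → u j = F (nu hbar j) (xtraj T t hbar B x0 u j)) →
      ∀ (j : ℕ) (s : ℝ), t j < s → s ≤ t (j + 1) →
        ‖T (s - t j) (xplus T t hbar B x0 u j)‖ ≤ C * Real.exp (-μ * s) * ‖x0‖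

/-- the infinite-horizon cost `J(u; x0, ℓ)` -/
def Jinf (Q : ℕ → H →L[ℝ] H) (R : ℕ → U →L[ℝ] U) (ℓ : ℕ) (x0 : H) (u : ℕ → U) : ℝ :=
  ∑' m : ℕ,
    (⟪Q (ℓ + m + 1) (xtrajFrom T t hbar B ℓ x0 u (m + 1)), xtrajFrom T t hbar B ℓ x0 u (m + 1)⟫
      + ⟪R (ℓ + m + 1) (u (ℓ + m + 1)), u (ℓ + m + 1)⟫)

/-- the infinite-horizon value function `V(x0; ℓ)` -/
def Vinf (Q : ℕ → H →L[ℝ] H) (R : ℕ → U →L[ℝ] U) (ℓ : ℕ) (x0 : H) : ℝ :=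
  sInf {c : ℝ | ∃ u ∈ UadFrom T t hbar B ℓ x0, c = Jinf T t hbar B Q R ℓ x0 u}

/-- the finite-horizon cost `J(u; x0, ℓ, k̂)` with terminal weight `M` -/
def Jfin (Q : ℕ → H →L[ℝ] H) (R : ℕ → U →L[ℝ] U) (M : H →L[ℝ] H)
    (ℓ khat : ℕ) (x0 : H) (u : ℕ → U) : ℝ :=
  (∑ m ∈ Finset.Icc 1 (khat - ℓ),
    (⟪Q (ℓ + m) (xtrajFrom T t hbar B ℓ x0 u m), xtrajFrom T t hbar B ℓ x0 u m⟫
      + ⟪R (ℓ + m) (u (ℓ + m)), u (ℓ + m)⟫))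
  + ⟪M (xplusFrom T t hbar B ℓ x0 u (khat - ℓ)), xplusFrom T t hbar B ℓ x0 u (khat - ℓ)⟫

/-- the finite-horizon value function `V(x0; ℓ, k̂)` with terminal weight `M` -/
def Vfin (Q : ℕ → H →L[ℝ] H) (R : ℕ → U →L[ℝ] U) (M : H →L[ℝ] H)
    (ℓ khat : ℕ) (x0 : H) : ℝ :=
  sInf {c : ℝ | ∃ u : ℕ → U, Summable (fun j : ℕ => ‖u (ℓ + j + 1)‖ ^ 2) ∧
    c = Jfin T t hbar B Q R M ℓ khat x0 u}

/-- the `k`-th equation of the periodic Riccati-type system, where `G` is the (two-sided)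
inverse of `R_k + B_k* P_k B_k`. -/
def RicEq (Q : ℕ → H →L[ℝ] H) (R : ℕ → U →L[ℝ] U) (P : ℕ → H →L[ℝ] H)
    (G : U →L[ℝ] U) (k : ℕ) : Prop :=
  G ∘L (R k + adj (B k) ∘L P k ∘L B k) = 1 ∧
  (R k + adj (B k) ∘L P k ∘L B k) ∘L G = 1 ∧
  P (k - 1) - adj (T (t k - t (k - 1))) ∘L P k ∘L T (t k - t (k - 1)) =
    adj (T (t k - t (k - 1))) ∘L Q k ∘L T (t k - t (k - 1))
      - adj (T (t k - t (k - 1))) ∘L P k ∘L B k ∘L G ∘L adj (B k) ∘L P k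
          ∘L T (t k - t (k - 1))

/-- `P_0, …, P_ħ` is a solution of the periodic Riccati-type equation. -/
def IsRicSol (Q : ℕ → H →L[ℝ] H) (R : ℕ → U →L[ℝ] U) (P : ℕ → H →L[ℝ] H) : Prop :=
  (∀ k : ℕ, k ≤ hbar → IsNonnegOp (P k)) ∧ P 0 = P hbar ∧
  ∀ k : ℕ, 1 ≤ k → k ≤ hbar → ∃ G : U →L[ℝ] U, RicEq T t B Q R P G k

end Defs


section Aux

open ContinuousLinearMap in
lemma step_eq {H U : Type*} [NormedAddCommGroup H] [InnerProductSpace ℝ H] [CompleteSpace H]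
    [NormedAddCommGroup U] [InnerProductSpace ℝ U] [CompleteSpace U]
    (S Pk Pk1 Qk : H →L[ℝ] H) (Rk : U →L[ℝ] U) (Bk : U →L[ℝ] H) (Gk : U →L[ℝ] U)
    (hPsa : IsSelfAdjoint Pk)
    (hG2 : (Rk + adj Bk ∘L Pk ∘L Bk) ∘L Gk = 1)
    (hric : Pk1 - adj S ∘L Pk ∘L S =
      adj S ∘L Qk ∘L S - adj S ∘L Pk ∘L Bk ∘L Gk ∘L adj Bk ∘L Pk ∘L S)
    (y : H) :
    ⟪Pk1 y, y⟫ =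
      ⟪Pk (S y + Bk (-(Gk (adj Bk (Pk (S y)))))), S y + Bk (-(Gk (adj Bk (Pk (S y)))))⟫
      + ⟪Qk (S y), S y⟫
      + ⟪Rk (-(Gk (adj Bk (Pk (S y))))), -(Gk (adj Bk (Pk (S y))))⟫ := by
  set x := S y with hx
  set v := adj Bk (Pk x) with hv
  set w := Gk v with hw
  have hPsym : ∀ a b : H, ⟪Pk a, b⟫ = ⟪a, Pk b⟫ := by
    intro a b
    have h := adjoint_inner_left Pk b a
    rw [isSelfAdjoint_iff'.mp hPsa] at h
    exact h
  have hWw : Rk w + adj Bk (Pk (Bk w)) = v := by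
    have h := congrArg (fun f : U →L[ℝ] U => f v) hG2
    simpa [ContinuousLinearMap.comp_apply, ← hw] using h
  have h2 : ⟪Pk x, Bk w⟫ = ⟪v, w⟫ := (ContinuousLinearMap.adjoint_inner_left Bk w (Pk x)).symm
  have h3 : ∀ z : U, ⟪Pk (Bk z), x⟫ = ⟪v, z⟫ := by
    intro z
    rw [hPsym, hv, adj, ← adjoint_inner_right Bk z (Pk x)]
    exact real_inner_comm _ _
  have h4 : ⟪Rk w, w⟫ + ⟪Pk (Bk w), Bk w⟫ = ⟪v, w⟫ := by
    have h : ⟪Pk (Bk w), Bk w⟫ = ⟪adj Bk (Pk (Bk w)), w⟫ :=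
      (adjoint_inner_left Bk w (Pk (Bk w))).symm
    rw [h, ← inner_add_left, hWw]
  have hexp : ⟪Pk (x + Bk (-w)), x + Bk (-w)⟫
      = ⟪Pk x, x⟫ - ⟪v, w⟫ - ⟪v, w⟫ + ⟪Pk (Bk w), Bk w⟫ := by
    rw [map_neg, map_add, map_neg, inner_add_left, inner_add_right, inner_add_right,
      inner_neg_left, inner_neg_right, inner_neg_left, inner_neg_right, h2, h3 w]
    ring
  have hricy := congrArg (fun f : H →L[ℝ] H => ⟪f y, y⟫) hric
  simp only [ContinuousLinearMap.sub_apply, ContinuousLinearMap.comp_apply,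
    inner_sub_left] at hricy
  rw [adj, adjoint_inner_left, adjoint_inner_left, adjoint_inner_left] at hricy
  rw [← hx] at hricy
  have h5 : ⟪Pk (Bk (Gk (adj Bk (Pk x)))), x⟫ = ⟪v, w⟫ := by
    rw [← hv, ← hw]; exact h3 w
  rw [h5] at hricy
  have hRneg : ⟪Rk (-w), -w⟫ = ⟪Rk w, w⟫ := by rw [map_neg, inner_neg_neg]
  rw [hexp, hRneg]
  linarith

lemma nu_pos' {hbar : ℕ} (h : 0 < hbar) (j : ℕ) : 1 ≤ nu hbar j := by
  unfold nu; split_ifs with h0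
  · exact h
  · omega

lemma nu_le' {hbar : ℕ} (h : 0 < hbar) (j : ℕ) : nu hbar j ≤ hbar := by
  unfold nu; split_ifs with h0
  · exact le_refl _
  · exact le_of_lt (Nat.mod_lt _ h)

lemma nu_one' {hbar : ℕ} (h : 0 < hbar) : nu hbar 1 = 1 := by
  unfold nu; split_ifs with h0
  · exact Nat.dvd_one.mp (Nat.dvd_of_mod_eq_zero h0)
  · rcases Nat.lt_or_ge 1 hbar with h1 | h1
    · exact Nat.mod_eq_of_lt h1
    · have : hbar = 1 := by omega
      subst this; simp at h0

lemma mod_succ' {hbar : ℕ} (h : 0 < hbar) (j : ℕ) :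
    (j + 1) % hbar = if j % hbar + 1 = hbar then 0 else j % hbar + 1 := by
  conv_lhs => rw [← Nat.mod_add_div j hbar]
  rw [Nat.add_right_comm, Nat.add_mul_mod_self_left]
  split_ifs with h1
  · rw [h1, Nat.mod_self]
  · exact Nat.mod_eq_of_lt (by have := Nat.mod_lt j h; omega)

lemma nu_succ' {hbar : ℕ} (h : 0 < hbar) (j : ℕ) :
    (nu hbar (j+1) = 1 ∧ nu hbar j = hbar) ∨
    (2 ≤ nu hbar (j+1) ∧ nu hbar j = nu hbar (j+1) - 1) := by
  have hm := mod_succ' h j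
  have hlt := Nat.mod_lt j h
  by_cases hc : j % hbar + 1 = hbar
  · rw [if_pos hc] at hm
    by_cases hr0 : j % hbar = 0
    · left; simp [nu, hm, hr0]; omega
    · right; simp [nu, hm, hr0]; omega
  · rw [if_neg hc] at hm
    by_cases hr0 : j % hbar = 0
    · left; simp [nu, hm, hr0]
    · right; simp [nu, hm, hr0]; omega

lemma nu_spec' {hbar : ℕ} (h : 0 < hbar) {j : ℕ} (hj : 1 ≤ j) :
    ∃ m : ℕ, j = nu hbar j + hbar * m := by
  by_cases hr0 : j % hbar = 0
  · obtain ⟨q, hq⟩ := Nat.dvd_of_mod_eq_zero hr0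
    refine ⟨q - 1, ?_⟩
    simp only [nu, if_pos hr0]
    cases q with
    | zero => omega
    | succ n => simp only [hq, Nat.mul_succ, Nat.succ_sub_one]; ring
  · exact ⟨j / hbar, by simp only [nu, if_neg hr0]; exact (Nat.mod_add_div j hbar).symm⟩

lemma t_shift' (t : ℕ → ℝ) (hbar : ℕ) (htper : ∀ j, t (j + hbar) = t j + t hbar) (a m : ℕ) :
    t (a + hbar * m) = t a + (m : ℝ) * t hbar := by
  induction m with
  | zero => simp
  | succ n ih =>
    have h1 : a + hbar * (n+1) = (a + hbar * n) + hbar := by ring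
    rw [h1, htper, ih]; push_cast; ring

end Aux

set_option maxHeartbeats 1000000 in
/-- Stabilizing feedback from a solution of the periodic Riccati-type equation:
with `F_k = -(R_k + B_k* P_k B_k)⁻¹ B_k* P_k` (here `G k` is the inverse of
`R_k + B_k* P_k B_k`), every closed-loop trajectory decays exponentially; in particular
the system is exponentially `ħ`-stabilizable. -/
theorem riccati_feedback_stabilizes
    {H U : Type*} [NormedAddCommGroup H] [InnerProductSpace ℝ H]
    [CompleteSpace H] [NormedAddCommGroup U] [InnerProductSpace ℝ U] [CompleteSpace U]
    (T : ℝ → H →L[ℝ] H) (hT0 : T 0 = 1)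
    (hTadd : ∀ a b : ℝ, 0 ≤ a → 0 ≤ b → T (a + b) = T a ∘L T b)
    (hTcont : ∀ x : H, ContinuousOn (fun τ : ℝ => T τ x) (Set.Ici (0 : ℝ)))
    (hbar : ℕ) (hhbar : 0 < hbar)
    (t : ℕ → ℝ) (ht0 : t 0 = 0) (htmono : StrictMono t)
    (htper : ∀ j : ℕ, t (j + hbar) = t j + t hbar)
    (B : ℕ → U →L[ℝ] H)
    (Q : ℕ → H →L[ℝ] H) (R : ℕ → U →L[ℝ] U)
    (hQ : MemMCoercive hbar Q) (hR : MemMCoercive hbar R)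
    (P : ℕ → H →L[ℝ] H) (G : ℕ → U →L[ℝ] U)
    (hPpos : ∀ k : ℕ, k ≤ hbar → IsNonnegOp (P k)) (hPper : P 0 = P hbar)
    (hRic : ∀ k : ℕ, 1 ≤ k → k ≤ hbar → RicEq T t B Q R P (G k) k) :
    (∃ C μ : ℝ, 0 < C ∧ 0 < μ ∧
      ∀ (x0 : H) (u : ℕ → U),
        -- closed loop: u_j = F_{ν(j)} x(t_j) with F_k = -(R_k + B_k* P_k B_k)⁻¹ B_k* P_k
        (∀ j : ℕ, 1 ≤ j →
          u j = -(G (nu hbar j)) (adj (B (nu hbar j)) (P (nu hbar j)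
            (xtraj T t hbar B x0 u j)))) →
        ∀ (j : ℕ) (s : ℝ), t j < s → s ≤ t (j + 1) →
          ‖T (s - t j) (xplus T t hbar B x0 u j)‖ ≤ C * Real.exp (-μ * s) * ‖x0‖) ∧
    ExpStabilizable T t hbar B := by
  classical
  -- basic time facts
  have ht_hbar_pos : 0 < t hbar := by rw [← ht0]; exact htmono hhbar
  have htnonneg : ∀ j : ℕ, 0 ≤ t j := fun j => by
    rw [← ht0]; exact htmono.monotone (Nat.zero_le j)
  have hgap_le : ∀ j : ℕ, t (j+1) - t j ≤ t hbar := by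
    intro j
    have h1 : t (j+1) ≤ t (j + hbar) := htmono.monotone (by omega)
    rw [htper j] at h1; linarith
  have ht_lin : ∀ j : ℕ, t j ≤ (j:ℝ) * t hbar := by
    intro j; induction j with
    | zero => simp [ht0]
    | succ n ih =>
      have h := hgap_le n
      push_cast
      push_cast at ih
      linarith
  -- uniform bound on the semigroup on [0, t hbar]
  obtain ⟨K0, hK0⟩ : ∃ K0 : ℝ, ∀ τ : Set.Icc (0:ℝ) (t hbar), ‖T τ‖ ≤ K0 := by
    apply banach_steinhaus (g := fun τ : Set.Icc (0:ℝ) (t hbar) => T τ)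
    intro x
    obtain ⟨Cx, hCx⟩ := (isCompact_Icc (a := (0:ℝ)) (b := t hbar)).exists_bound_of_continuousOn
      ((hTcont x).mono (fun τ hτ => hτ.1))
    exact ⟨Cx, fun i => hCx i i.2⟩
  set K := max K0 1 with hKdef
  have hK1 : (1:ℝ) ≤ K := le_max_right _ _
  have hKpos : (0:ℝ) < K := by linarith
  have hK : ∀ τ : ℝ, 0 ≤ τ → τ ≤ t hbar → ∀ z : H, ‖T τ z‖ ≤ K * ‖z‖ := by
    intro τ h1 h2 z
    calc ‖T τ z‖ ≤ ‖T τ‖ * ‖z‖ := ContinuousLinearMap.le_opNorm _ _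
    _ ≤ K * ‖z‖ := by
        apply mul_le_mul_of_nonneg_right _ (norm_nonneg z)
        exact le_trans (hK0 ⟨τ, h1, h2⟩) (le_max_left _ _)
  -- coercivity constant for Q
  set δf : ℕ → ℝ := fun k => if h : 1 ≤ k then Classical.choose (hQ.1 k h).2 else 1 with hδfdef
  have hδf : ∀ k : ℕ, 1 ≤ k → 0 < δf k ∧ ∀ x : H, δf k * ‖x‖ ^ 2 ≤ ⟪Q k x, x⟫ := by
    intro k hk
    simp only [hδfdef, dif_pos hk]
    exact Classical.choose_spec (hQ.1 k hk).2
  have hIcc_ne : (Finset.Icc 1 hbar).Nonempty := ⟨1, Finset.mem_Icc.mpr ⟨le_refl 1, hhbar⟩⟩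
  set δ := (Finset.Icc 1 hbar).inf' hIcc_ne δf with hδdef
  have hδpos : 0 < δ := by
    rw [hδdef, Finset.lt_inf'_iff]
    intro k hk
    exact (hδf k (Finset.mem_Icc.mp hk).1).1
  have hδQ : ∀ k : ℕ, 1 ≤ k → k ≤ hbar → ∀ x : H, δ * ‖x‖ ^ 2 ≤ ⟪Q k x, x⟫ := by
    intro k h1 h2 x
    have hle : δ ≤ δf k := Finset.inf'_le _ (Finset.mem_Icc.mpr ⟨h1, h2⟩)
    refine le_trans (mul_le_mul_of_nonneg_right hle (by positivity)) ((hδf k h1).2 x)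
  -- operator norm constants
  set cB := (Finset.Icc 1 hbar).sup' hIcc_ne
      (fun k => ‖B k ∘L G k ∘L adj (B k) ∘L P k‖) with hcBdef
  have hcBk : ∀ k : ℕ, 1 ≤ k → k ≤ hbar → ‖B k ∘L G k ∘L adj (B k) ∘L P k‖ ≤ cB := by
    intro k h1 h2
    rw [hcBdef]
    exact Finset.le_sup' (fun k => ‖B k ∘L G k ∘L adj (B k) ∘L P k‖)
      (Finset.mem_Icc.mpr ⟨h1, h2⟩)
  have hcB0 : 0 ≤ cB := le_trans (norm_nonneg _) (hcBk 1 (le_refl 1) hhbar)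
  set c1 := 1 + cB with hc1def
  have hc1 : (1:ℝ) ≤ c1 := by linarith
  have hrange_ne : (0:ℕ) ∈ Finset.range (hbar+1) := Finset.mem_range.mpr (by omega)
  set cP := (Finset.range (hbar+1)).sup' ⟨0, hrange_ne⟩ (fun k => ‖P k‖) with hcPdef
  have hcPk : ∀ k : ℕ, k ≤ hbar → ‖P k‖ ≤ cP := by
    intro k hk
    rw [hcPdef]
    exact Finset.le_sup' (fun k => ‖P k‖) (Finset.mem_range.mpr (by omega))
  have hcP0 : 0 ≤ cP := le_trans (norm_nonneg (P 0)) (hcPk 0 (Nat.zero_le _))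
  set M' := cP * c1 ^ 2 + 1 with hM'def
  have hM'1 : (1:ℝ) ≤ M' := by nlinarith
  set r := M' / (M' + δ) with hrdef
  have hr0 : 0 < r := div_pos (by linarith) (by linarith)
  have hr1 : r < 1 := by rw [hrdef, div_lt_one (by linarith)]; linarith
  have hrid : (M' + δ) * r = M' := by rw [hrdef]; field_simp
  set μ := (-Real.log r) / (2 * t hbar) with hμdef
  have hlogr : Real.log r < 0 := Real.log_neg hr0 hr1
  have hμpos : 0 < μ := div_pos (by linarith) (by linarith)
  set c3 := cP / δ with hc3def
  have hc30 : 0 ≤ c3 := div_nonneg hcP0 hδpos.le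
  set C := max (K * Real.exp (μ * t hbar)) ((K * c1 * Real.sqrt c3 + 1) / r) with hCdef
  have hCpos : 0 < C := lt_of_lt_of_le (by positivity) (le_max_left _ _)
  clear_value K δf δ cB c1 cP M' r μ c3 C
  have habs : ∀ a b : ℝ, 0 ≤ a → 0 ≤ b → a ^ 2 ≤ b ^ 2 → a ≤ b := by
    intro a b ha hb h; nlinarith
  -- the main estimate
  have main : ∀ (x0 : H) (u : ℕ → U),
      (∀ j : ℕ, 1 ≤ j →
        u j = -(G (nu hbar j)) (adj (B (nu hbar j)) (P (nu hbar j)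
          (xtraj T t hbar B x0 u j)))) →
      ∀ (j : ℕ) (s : ℝ), t j < s → s ≤ t (j + 1) →
        ‖T (s - t j) (xplus T t hbar B x0 u j)‖ ≤ C * Real.exp (-μ * s) * ‖x0‖ := by
    intro x0 u hu
    set X := xtraj T t hbar B x0 u with hXdef
    set Xp := xplus T t hbar B x0 u with hXpdef
    have hXp0 : Xp 0 = x0 := rfl
    have hX : ∀ j : ℕ, X (j+1) = T (t (j+1) - t j) (Xp j) := by
      intro j
      show xtrajFrom T t hbar B 0 x0 u (j+1) = _
      rw [xtrajFrom]
      norm_num [hXpdef, xplus]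
    have hXp : ∀ j : ℕ, Xp (j+1) = X (j+1) + B (nu hbar (j+1)) (u (j+1)) := by
      intro j
      rw [hX j]
      show xplusFrom T t hbar B 0 x0 u (j+1) = _
      rw [xplusFrom]
      norm_num [hXpdef, xplus]
    set Pσ : ℕ → (H →L[ℝ] H) := fun j => if j = 0 then P 0 else P (nu hbar j) with hPσdef
    have hPσ : ∀ j : ℕ, Pσ j = P (nu hbar (j+1) - 1) := by
      intro j
      cases j with
      | zero => simp [hPσdef, nu_one' hhbar]
      | succ n =>
        simp only [hPσdef, if_neg (Nat.succ_ne_zero n)]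
        rcases nu_succ' hhbar (n+1) with ⟨h1, h2⟩ | ⟨h1, h2⟩
        · rw [h1, h2]; simpa using hPper.symm
        · rw [h2]
    have hPσnn : ∀ j : ℕ, IsNonnegOp (Pσ j) := by
      intro j
      cases j with
      | zero => exact hPpos 0 (Nat.zero_le _)
      | succ n =>
        simp only [hPσdef, if_neg (Nat.succ_ne_zero n)]
        exact hPpos _ (nu_le' hhbar _)
    set V : ℕ → ℝ := fun j => ⟪Pσ j (Xp j), Xp j⟫ with hVdef
    have hVnn : ∀ j : ℕ, 0 ≤ V j := fun j => (hPσnn j).2 _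
    -- the one-step Lyapunov inequality
    have hstep : ∀ j : ℕ, V (j+1) + δ * ‖X (j+1)‖ ^ 2 ≤ V j := by
      intro j
      have hk1 : 1 ≤ nu hbar (j+1) := nu_pos' hhbar _
      have hk2 : nu hbar (j+1) ≤ hbar := nu_le' hhbar _
      obtain ⟨hG1, hG2, heq⟩ := hRic _ hk1 hk2
      have hgap : t (j+1) - t j = t (nu hbar (j+1)) - t (nu hbar (j+1) - 1) := by
        obtain ⟨m, hm⟩ := nu_spec' hhbar (j := j+1) (by omega)
        have h' : nu hbar (j+1) - 1 + 1 = nu hbar (j+1) := Nat.succ_pred_eq_of_pos hk1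
        have hj' : j = (nu hbar (j+1) - 1) + hbar * m := by
          generalize hMn : hbar * m = Mn at hm ⊢
          omega
        have e1 : t (j+1) = t (nu hbar (j+1)) + (m:ℝ) * t hbar := by
          rw [congrArg t hm, t_shift' t hbar htper]
        have e2 : t j = t (nu hbar (j+1) - 1) + (m:ℝ) * t hbar := by
          rw [congrArg t hj', t_shift' t hbar htper]
        rw [e1, e2]; ring
      have hS : X (j+1) = T (t (nu hbar (j+1)) - t (nu hbar (j+1) - 1)) (Xp j) := by
        rw [hX j, hgap]
      have hu' : u (j+1) = -(G (nu hbar (j+1)) (adj (B (nu hbar (j+1)))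
          (P (nu hbar (j+1)) (X (j+1))))) := hu (j+1) (by omega)
      have hkey := step_eq (T (t (nu hbar (j+1)) - t (nu hbar (j+1) - 1)))
        (P (nu hbar (j+1))) (Pσ j) (Q (nu hbar (j+1))) (R (nu hbar (j+1)))
        (B (nu hbar (j+1))) (G (nu hbar (j+1))) (hPpos _ hk2).1 hG2
        (by rw [hPσ j]; exact heq) (Xp j)
      rw [← hS, ← hu', ← hXp j] at hkey
      have hV1 : V (j+1) = ⟪P (nu hbar (j+1)) (Xp (j+1)), Xp (j+1)⟫ := by
        simp [hVdef, hPσdef]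
      have hQb := hδQ _ hk1 hk2 (X (j+1))
      have hRb := (hR.1 _ hk1).1.2 (u (j+1))
      have hV0' : V j = ⟪Pσ j (Xp j), Xp j⟫ := rfl
      rw [hV0', hV1, hkey]
      linarith
    -- telescoping
    have htel : ∀ ℓ n : ℕ,
        δ * (∑ i ∈ Finset.Icc (ℓ+1) (ℓ+n), ‖X i‖ ^ 2) + V (ℓ+n) ≤ V ℓ := by
      intro ℓ n
      induction n with
      | zero => simp [Finset.Icc_eq_empty_of_lt (by omega : ℓ < ℓ + 1)]
      | succ m ih =>
        have h1 := hstep (ℓ + m)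
        have h2 : ℓ + (m+1) = (ℓ + m) + 1 := by omega
        rw [h2, Finset.sum_Icc_succ_top (by omega), mul_add]
        linarith
    -- norm comparison between pre- and post-impulse states
    have hXple : ∀ j : ℕ, ‖Xp (j+1)‖ ≤ c1 * ‖X (j+1)‖ := by
      intro j
      have hk1 : 1 ≤ nu hbar (j+1) := nu_pos' hhbar _
      have hk2 : nu hbar (j+1) ≤ hbar := nu_le' hhbar _
      have hcomb : Xp (j+1) = X (j+1) -
          (B (nu hbar (j+1)) ∘L G (nu hbar (j+1)) ∘L adj (B (nu hbar (j+1)))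
            ∘L P (nu hbar (j+1))) (X (j+1)) := by
        rw [hXp j, hu (j+1) (by omega)]
        simp [ContinuousLinearMap.comp_apply, sub_eq_add_neg]
      rw [hcomb]
      calc ‖X (j+1) - (B (nu hbar (j+1)) ∘L G (nu hbar (j+1)) ∘L adj (B (nu hbar (j+1)))
            ∘L P (nu hbar (j+1))) (X (j+1))‖
          ≤ ‖X (j+1)‖ + ‖(B (nu hbar (j+1)) ∘L G (nu hbar (j+1)) ∘L adj (B (nu hbar (j+1)))
            ∘L P (nu hbar (j+1))) (X (j+1))‖ := norm_sub_le _ _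
      _ ≤ ‖X (j+1)‖ + cB * ‖X (j+1)‖ := by
          have h1 := ContinuousLinearMap.le_opNorm
            (B (nu hbar (j+1)) ∘L G (nu hbar (j+1)) ∘L adj (B (nu hbar (j+1)))
              ∘L P (nu hbar (j+1))) (X (j+1))
          have h2 := hcBk _ hk1 hk2
          nlinarith [norm_nonneg (X (j+1))]
      _ = c1 * ‖X (j+1)‖ := by rw [hc1def]; ring
    have hVle : ∀ ℓ : ℕ, 1 ≤ ℓ → V ℓ ≤ M' * ‖X ℓ‖ ^ 2 := by
      intro ℓ hℓ
      obtain ⟨j, rfl⟩ : ∃ j, ℓ = j + 1 := ⟨ℓ - 1, by omega⟩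
      have h1 : V (j+1) = ⟪P (nu hbar (j+1)) (Xp (j+1)), Xp (j+1)⟫ := by
        simp [hVdef, hPσdef]
      have h2 := real_inner_le_norm (P (nu hbar (j+1)) (Xp (j+1))) (Xp (j+1))
      have h3 := ContinuousLinearMap.le_opNorm (P (nu hbar (j+1))) (Xp (j+1))
      have h4 := hcPk _ (nu_le' hhbar (j+1))
      have h5 := hXple j
      have hXp2 : ‖Xp (j+1)‖ ^ 2 ≤ (c1 * ‖X (j+1)‖) ^ 2 :=
        pow_le_pow_left₀ (norm_nonneg _) h5 2
      have hA : ⟪P (nu hbar (j+1)) (Xp (j+1)), Xp (j+1)⟫ ≤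
          ‖P (nu hbar (j+1))‖ * ‖Xp (j+1)‖ ^ 2 := by
        nlinarith [h2, mul_le_mul_of_nonneg_right h3 (norm_nonneg (Xp (j+1)))]
      rw [h1, hM'def]
      nlinarith [hA, mul_le_mul_of_nonneg_right h4 (sq_nonneg (‖Xp (j+1)‖)),
        mul_le_mul_of_nonneg_left hXp2 hcP0, sq_nonneg (‖X (j+1)‖)]
    -- geometric decay of ‖X N‖²
    have hgeo : ∀ N : ℕ, 1 ≤ N → ‖X N‖ ^ 2 ≤ c3 * ‖x0‖ ^ 2 * r ^ (N - 1) := by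
      intro N hN
      set s' : ℕ → ℝ := fun ℓ => ∑ i ∈ Finset.Icc ℓ N, ‖X i‖ ^ 2 with hs'def
      have hs'nn : ∀ ℓ, 0 ≤ s' ℓ := fun ℓ => Finset.sum_nonneg (fun i _ => by positivity)
      have htail : ∀ ℓ : ℕ, δ * s' (ℓ+1) ≤ V ℓ := by
        intro ℓ
        rcases le_or_gt ℓ N with h | h
        · have h1 := htel ℓ (N - ℓ)
          rw [show ℓ + (N - ℓ) = N from by omega] at h1
          have h2 := hVnn N
          simp only [hs'def]
          linarith
        · have e1 : s' (ℓ+1) = 0 := by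
            simp [hs'def, Finset.Icc_eq_empty_of_lt (by omega : N < ℓ + 1)]
          rw [e1, mul_zero]
          exact hVnn ℓ
      have hrec : ∀ ℓ : ℕ, 1 ≤ ℓ → s' (ℓ+1) ≤ r * s' ℓ := by
        intro ℓ hℓ
        rcases le_or_gt ℓ N with h | h
        · have hsplit : s' ℓ = ‖X ℓ‖ ^ 2 + s' (ℓ+1) := by
            simp only [hs'def]
            rw [show Finset.Icc ℓ N = insert ℓ (Finset.Icc (ℓ+1) N) from by
              ext i; simp only [Finset.mem_Icc, Finset.mem_insert]; omega]
            rw [Finset.sum_insert (by simp only [Finset.mem_Icc]; omega)]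
          have h1 := htail ℓ
          have h2 := hVle ℓ hℓ
          have hXX : ‖X ℓ‖ ^ 2 = s' ℓ - s' (ℓ+1) := by linarith
          have h3 : δ * s' (ℓ+1) ≤ M' * (s' ℓ - s' (ℓ+1)) := by rw [← hXX]; linarith
          have h4 : (M' + δ) * s' (ℓ+1) ≤ M' * s' ℓ := by nlinarith
          have h5 : (M' + δ) * s' (ℓ+1) ≤ (M' + δ) * (r * s' ℓ) := by
            rw [← mul_assoc, hrid]; exact h4
          exact (mul_le_mul_iff_right₀ (by linarith : (0:ℝ) < M' + δ)).mp h5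
        · have e1 : s' (ℓ+1) = 0 := by
            simp [hs'def, Finset.Icc_eq_empty_of_lt (by omega : N < ℓ + 1)]
          rw [e1]
          exact mul_nonneg hr0.le (hs'nn ℓ)
      have hiter : ∀ m : ℕ, s' (1+m) ≤ r ^ m * s' 1 := by
        intro m
        induction m with
        | zero => simp
        | succ n ih =>
          have h0 : (1+(n+1)) = (1+n)+1 := by omega
          rw [h0]
          calc s' ((1+n)+1) ≤ r * s' (1+n) := hrec (1+n) (by omega)
          _ ≤ r * (r ^ n * s' 1) := mul_le_mul_of_nonneg_left ih hr0.le
          _ = r ^ (n+1) * s' 1 := by ring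
      have hXN : ‖X N‖ ^ 2 ≤ s' N := by
        simp only [hs'def]
        exact Finset.single_le_sum (f := fun i => ‖X i‖ ^ 2) (fun i _ => by positivity)
          (Finset.mem_Icc.mpr ⟨le_refl N, le_refl N⟩)
      have hs1 : δ * s' 1 ≤ V 0 := by
        have h1 := htel 0 N
        rw [Nat.zero_add] at h1
        have h2 := hVnn N
        simp only [hs'def]
        simp only [Nat.zero_add] at h1
        linarith
      have hV0b : V 0 ≤ cP * ‖x0‖ ^ 2 := by
        have e1 : V 0 = ⟪P 0 x0, x0⟫ := by simp [hVdef, hPσdef, hXp0]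
        rw [e1]
        nlinarith [real_inner_le_norm (P 0 x0) x0, ContinuousLinearMap.le_opNorm (P 0) x0,
          hcPk 0 (Nat.zero_le _), norm_nonneg x0, norm_nonneg (P 0 x0)]
      have hs1' : s' 1 ≤ cP * ‖x0‖ ^ 2 / δ := by
        rw [le_div_iff₀ hδpos]
        nlinarith
      calc ‖X N‖ ^ 2 ≤ s' N := hXN
      _ = s' (1 + (N - 1)) := by congr 1; omega
      _ ≤ r ^ (N - 1) * s' 1 := hiter (N - 1)
      _ ≤ r ^ (N - 1) * (cP * ‖x0‖ ^ 2 / δ) :=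
          mul_le_mul_of_nonneg_left hs1' (by positivity)
      _ = c3 * ‖x0‖ ^ 2 * r ^ (N - 1) := by rw [hc3def]; ring
    -- conclusion
    intro j s hs1 hs2
    have hτ1 : 0 ≤ s - t j := by linarith
    have hτ2 : s - t j ≤ t hbar := by have := hgap_le j; linarith
    have hKb := hK (s - t j) hτ1 hτ2 (Xp j)
    have hs_le : s ≤ ((j:ℝ) + 1) * t hbar := by
      have h := ht_lin (j+1)
      push_cast at h
      linarith
    cases j with
    | zero =>
      have hsth : s ≤ t hbar := by
        have h1 : t 1 ≤ t hbar := htmono.monotone hhbar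
        linarith
      have h2 : K ≤ C * Real.exp (-μ * s) := by
        have hCK : K * Real.exp (μ * t hbar) ≤ C := by
          rw [hCdef]; exact le_max_left _ _
        have he : (1:ℝ) ≤ Real.exp (μ * t hbar) * Real.exp (-μ * s) := by
          rw [← Real.exp_add]
          rw [show μ * t hbar + -μ * s = μ * (t hbar - s) from by ring]
          have : (0:ℝ) ≤ μ * (t hbar - s) := mul_nonneg hμpos.le (by linarith)
          calc (1:ℝ) = Real.exp 0 := Real.exp_zero.symm
          _ ≤ Real.exp (μ * (t hbar - s)) := Real.exp_le_exp.mpr this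
        calc K = K * 1 := (mul_one K).symm
        _ ≤ K * (Real.exp (μ * t hbar) * Real.exp (-μ * s)) :=
            mul_le_mul_of_nonneg_left he hKpos.le
        _ = (K * Real.exp (μ * t hbar)) * Real.exp (-μ * s) := by ring
        _ ≤ C * Real.exp (-μ * s) :=
            mul_le_mul_of_nonneg_right hCK (Real.exp_pos _).le
      rw [hXp0] at hKb
      calc ‖T (s - t 0) (Xp 0)‖ ≤ K * ‖x0‖ := by rw [hXp0]; exact hKb
      _ ≤ (C * Real.exp (-μ * s)) * ‖x0‖ := mul_le_mul_of_nonneg_right h2 (norm_nonneg _)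
      _ = C * Real.exp (-μ * s) * ‖x0‖ := by ring
    | succ n =>
      set j := n + 1 with hjdef
      have hj1 : 1 ≤ j := by omega
      -- power estimate
      have hrpow : r ^ (j - 1) ≤ Real.exp (-(2*μ)*s) / r ^ 2 := by
        have hsle : s / t hbar ≤ (j:ℝ) + 1 := by
          rw [div_le_iff₀ ht_hbar_pos]; linarith
        have hmono : ((j:ℝ) + 1) * Real.log r ≤ (s / t hbar) * Real.log r :=
          mul_le_mul_of_nonpos_right hsle hlogr.le
        have hcast : ((j - 1 : ℕ) : ℝ) = (j:ℝ) - 1 := by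
          push_cast [Nat.cast_sub hj1]; ring
        have e3 : Real.exp ((-2) * Real.log r) = 1 / r ^ 2 := by
          rw [show (-2:ℝ) * Real.log r = -(Real.log r + Real.log r) from by ring,
            Real.exp_neg, Real.exp_add, Real.exp_log hr0, sq]
          exact (one_div _).symm
        have eμ : (s / t hbar) * Real.log r = -(2*μ)*s := by
          rw [hμdef]; field_simp
        calc r ^ (j - 1) = Real.exp (Real.log r) ^ (j - 1) := by rw [Real.exp_log hr0]
        _ = Real.exp (((j-1:ℕ):ℝ) * Real.log r) := (Real.exp_nat_mul _ _).symm
        _ = Real.exp (((j:ℝ)+1) * Real.log r) * Real.exp ((-2) * Real.log r) := by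
            rw [← Real.exp_add]; congr 1; rw [hcast]; ring
        _ ≤ Real.exp ((s / t hbar) * Real.log r) * Real.exp ((-2) * Real.log r) :=
            mul_le_mul_of_nonneg_right (Real.exp_le_exp.mpr hmono) (Real.exp_pos _).le
        _ = Real.exp (-(2*μ)*s) / r ^ 2 := by rw [eμ, e3]; ring
      have hXb : ‖X j‖ ≤ Real.sqrt c3 * ‖x0‖ * Real.sqrt (r ^ (j-1)) := by
        have h := hgeo j hj1
        have e0 : ‖X j‖ = Real.sqrt (‖X j‖ ^ 2) := (Real.sqrt_sq (norm_nonneg _)).symm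
        rw [e0]
        calc Real.sqrt (‖X j‖ ^ 2) ≤ Real.sqrt (c3 * ‖x0‖ ^ 2 * r ^ (j-1)) :=
            Real.sqrt_le_sqrt h
        _ = Real.sqrt c3 * ‖x0‖ * Real.sqrt (r ^ (j-1)) := by
            rw [Real.sqrt_mul (by positivity), Real.sqrt_mul hc30,
              Real.sqrt_sq (norm_nonneg _)]
      have hsqrt_r : Real.sqrt (r ^ (j-1)) ≤ Real.exp (-μ * s) / r := by
        apply habs _ _ (Real.sqrt_nonneg _) (by positivity)
        rw [Real.sq_sqrt (by positivity)]
        calc r ^ (j-1) ≤ Real.exp (-(2*μ)*s) / r ^ 2 := hrpow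
        _ = (Real.exp (-μ*s) / r) ^ 2 := by
            rw [show (Real.exp (-μ*s) / r) ^ 2
                = Real.exp (-μ*s) * Real.exp (-μ*s) / r ^ 2 from by ring,
              ← Real.exp_add]
            congr 2
            ring
      have hfinal : K * c1 * Real.sqrt c3 / r ≤ C := by
        rw [hCdef]
        refine le_trans ?_ (le_max_right _ _)
        exact (div_le_div_iff_of_pos_right hr0).mpr (by linarith [Real.sqrt_nonneg c3])
      calc ‖T (s - t j) (Xp j)‖ ≤ K * ‖Xp j‖ := hKb
      _ ≤ K * (c1 * ‖X j‖) := mul_le_mul_of_nonneg_left (hXple n) hKpos.le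
      _ ≤ K * (c1 * (Real.sqrt c3 * ‖x0‖ * (Real.exp (-μ * s) / r))) := by
          apply mul_le_mul_of_nonneg_left _ hKpos.le
          apply mul_le_mul_of_nonneg_left _ (by linarith : (0:ℝ) ≤ c1)
          calc ‖X j‖ ≤ Real.sqrt c3 * ‖x0‖ * Real.sqrt (r ^ (j-1)) := hXb
          _ ≤ Real.sqrt c3 * ‖x0‖ * (Real.exp (-μ * s) / r) :=
              mul_le_mul_of_nonneg_left hsqrt_r (by positivity)
      _ = (K * c1 * Real.sqrt c3 / r) * Real.exp (-μ * s) * ‖x0‖ := by ring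
      _ ≤ C * Real.exp (-μ * s) * ‖x0‖ := by
          apply mul_le_mul_of_nonneg_right _ (norm_nonneg _)
          exact mul_le_mul_of_nonneg_right hfinal (Real.exp_pos _).le
  constructor
  · exact ⟨C, μ, hCpos, hμpos, main⟩
  · refine ⟨fun k => -((G k).comp ((adj (B k)).comp (P k))), C, μ, hCpos, hμpos, ?_⟩
    intro x0 u hu
    apply main x0 u
    intro j hj
    rw [hu j hj]
    simp [ContinuousLinearMap.neg_apply, ContinuousLinearMap.comp_apply]


end ImpulseControl
end
end

section
/- Finite-horizon LQ value identity. Let (Q_j)_{j∈ℕ⁺} ∈ M_{ħ,+}(H), (R_j)_{j∈ℕ⁺} ∈ M_{ħ,≫}(U), M ∈ SL_+(H) and k̂ ∈ ℕ⁺, and let {P^{k̂}_j}_{j=0}^{k̂} be given by the backward Riccati-type recursion. Then for every ℓ ∈ ℕ with ℓ < k̂ and every x_0 ∈ H, V(x_0;ℓ,k̂) = ⟨P^{k̂}_ℓ x_0, x_0⟩_H. -/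
open scoped RealInnerProductSpace
noncomputable section

namespace ImpulseControl

variable {H U : Type*} [NormedAddCommGroup H] [InnerProductSpace ℝ H] [CompleteSpace H]
  [NormedAddCommGroup U] [InnerProductSpace ℝ U] [CompleteSpace U]

section Aux

open ContinuousLinearMap

variable {H U : Type*} [NormedAddCommGroup H] [InnerProductSpace ℝ H] [CompleteSpace H]
  [NormedAddCommGroup U] [InnerProductSpace ℝ U] [CompleteSpace U]

lemma sa_of_inv {E : Type*} [NormedAddCommGroup E] [InnerProductSpace ℝ E] [CompleteSpace E]
    {S G : E →L[ℝ] E} (hS : adjoint S = S) (h1 : G ∘L S = 1) (h2 : S ∘L G = 1) :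
    adjoint G = G := by
  have h3 : S ∘L adjoint G = 1 := by
    have := congrArg (fun f => adjoint f) h1
    simpa [adjoint_comp, hS, one_def, adjoint_id] using this
  calc adjoint G = (G ∘L S) ∘L adjoint G := by rw [h1, one_def, id_comp]
    _ = G ∘L (S ∘L adjoint G) := by rw [comp_assoc]
    _ = G := by rw [h3, one_def, comp_id]

lemma lq_step (Pm1 Pj Qj : H →L[ℝ] H) (Rj : U →L[ℝ] U) (Bj : U →L[ℝ] H) (Gj : U →L[ℝ] U)
    (Tj : H →L[ℝ] H)
    (hPj : adjoint Pj = Pj) (hRj : adjoint Rj = Rj)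
    (hG2 : (Rj + adjoint Bj ∘L Pj ∘L Bj) ∘L Gj = 1)
    (hrec : Pm1 = adjoint Tj ∘L (Qj + Pj - Pj ∘L Bj ∘L Gj ∘L adjoint Bj ∘L Pj) ∘L Tj)
    (x : H) (u : U) :
    ⟪Qj (Tj x), Tj x⟫ + ⟪Rj u, u⟫ + ⟪Pj (Tj x + Bj u), Tj x + Bj u⟫
      = ⟪Pm1 x, x⟫ +
        ⟪(Rj + adjoint Bj ∘L Pj ∘L Bj) (u + Gj (adjoint Bj (Pj (Tj x)))),
          u + Gj (adjoint Bj (Pj (Tj x)))⟫ := by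
  set y := Tj x with hy
  set b := adjoint Bj (Pj y) with hb
  set S := Rj + adjoint Bj ∘L Pj ∘L Bj with hSdef
  have hSapp : ∀ z : U, S z = Rj z + adjoint Bj (Pj (Bj z)) := by
    intro z; simp [hSdef]
  have hSG : ∀ z : U, S (Gj z) = z := by
    intro z
    have := congrArg (fun f : U →L[ℝ] U => f z) hG2
    simpa using this
  have hSsa : adjoint S = S := by
    rw [hSdef]
    simp only [map_add, adjoint_comp, adjoint_adjoint, hPj, hRj, comp_assoc]
  have hPsym : ∀ a c : H, ⟪Pj a, c⟫ = ⟪a, Pj c⟫ := by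
    intro a c; rw [← hPj, adjoint_inner_left, hPj]
  have hcross : ⟪S u, Gj b⟫ = ⟪u, b⟫ := by
    calc ⟪S u, Gj b⟫ = ⟪(adjoint S) u, Gj b⟫ := by rw [hSsa]
      _ = ⟪u, S (Gj b)⟫ := adjoint_inner_left _ _ _
      _ = ⟪u, b⟫ := by rw [hSG]
  have hPm1 : ⟪Pm1 x, x⟫ = ⟪Qj y, y⟫ + ⟪Pj y, y⟫ - ⟪b, Gj b⟫ := by
    rw [hrec]
    have h1 : ((adjoint Tj ∘L (Qj + Pj - Pj ∘L Bj ∘L Gj ∘L adjoint Bj ∘L Pj) ∘L Tj) x)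
        = adjoint Tj ((Qj + Pj - Pj ∘L Bj ∘L Gj ∘L adjoint Bj ∘L Pj) (Tj x)) := rfl
    rw [h1, adjoint_inner_left]
    simp only [ContinuousLinearMap.sub_apply, ContinuousLinearMap.add_apply, comp_apply,
      inner_sub_left, inner_add_left, ← hy, ← hb]
    have h2 : ⟪Pj (Bj (Gj b)), y⟫ = ⟪b, Gj b⟫ := by
      rw [hPsym, ← adjoint_inner_right, ← hb, real_inner_comm]
    rw [h2]
  have hexpand : ⟪Pj (y + Bj u), y + Bj u⟫
      = ⟪Pj y, y⟫ + 2 * ⟪Pj y, Bj u⟫ + ⟪Pj (Bj u), Bj u⟫ := by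
    rw [map_add, inner_add_left, inner_add_right, inner_add_right]
    have : ⟪Pj (Bj u), y⟫ = ⟪Pj y, Bj u⟫ := by rw [hPsym, real_inner_comm]
    rw [this]; ring
  have hub : ⟪u, b⟫ = ⟪Pj y, Bj u⟫ := by
    rw [hb, adjoint_inner_right, real_inner_comm]
  have hSw : ⟪S (u + Gj b), u + Gj b⟫
      = ⟪Rj u, u⟫ + ⟪Pj (Bj u), Bj u⟫ + 2 * ⟪Pj y, Bj u⟫ + ⟪b, Gj b⟫ := by
    rw [map_add, hSG, inner_add_left, inner_add_right, inner_add_right, hcross]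
    have h3 : ⟪S u, u⟫ = ⟪Rj u, u⟫ + ⟪Pj (Bj u), Bj u⟫ := by
      rw [hSapp, inner_add_left, adjoint_inner_left]
    have h4 : ⟪b, u⟫ = ⟪Pj y, Bj u⟫ := by rw [real_inner_comm, hub]
    rw [h3, h4, hub]; ring
  rw [hexpand, hPm1, hSw]; ring

/-- feedback closed-loop state sequence -/
def fbState (T : ℝ → H →L[ℝ] H) (t : ℕ → ℝ) (hbar : ℕ) (B : ℕ → U →L[ℝ] H)
    (P : ℕ → H →L[ℝ] H) (G : ℕ → U →L[ℝ] U) (ℓ : ℕ) (x0 : H) : ℕ → H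
  | 0 => x0
  | m + 1 => T (t (ℓ + m + 1) - t (ℓ + m)) (fbState T t hbar B P G ℓ x0 m)
      - B (nu hbar (ℓ + m + 1)) (G (ℓ + m + 1) (adjoint (B (nu hbar (ℓ + m + 1)))
          (P (ℓ + m + 1) (T (t (ℓ + m + 1) - t (ℓ + m)) (fbState T t hbar B P G ℓ x0 m)))))

/-- feedback control -/
def fbCtrl (T : ℝ → H →L[ℝ] H) (t : ℕ → ℝ) (hbar : ℕ) (B : ℕ → U →L[ℝ] H)
    (P : ℕ → H →L[ℝ] H) (G : ℕ → U →L[ℝ] U) (ℓ khat : ℕ) (x0 : H) (j : ℕ) : U :=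
  if ℓ + 1 ≤ j ∧ j ≤ khat then
    -(G j (adjoint (B (nu hbar j)) (P j (T (t j - t (j - 1))
      (fbState T t hbar B P G ℓ x0 (j - (ℓ + 1)))))))
  else 0

end Aux

set_option maxHeartbeats 1600000

/-- Proposition 2.2: the finite-horizon LQ value identity
`V(x0; ℓ, k̂) = ⟨P^{k̂}_ℓ x0, x0⟩`. -/
theorem finite_horizon_value_identity
    {H U : Type*} [NormedAddCommGroup H] [InnerProductSpace ℝ H]
    [CompleteSpace H] [NormedAddCommGroup U] [InnerProductSpace ℝ U] [CompleteSpace U]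
    (T : ℝ → H →L[ℝ] H) (hT0 : T 0 = 1)
    (hTadd : ∀ a b : ℝ, 0 ≤ a → 0 ≤ b → T (a + b) = T a ∘L T b)
    (hTcont : ∀ x : H, ContinuousOn (fun τ : ℝ => T τ x) (Set.Ici (0 : ℝ)))
    (hbar : ℕ) (hhbar : 0 < hbar)
    (t : ℕ → ℝ) (ht0 : t 0 = 0) (htmono : StrictMono t)
    (htper : ∀ j : ℕ, t (j + hbar) = t j + t hbar)
    (B : ℕ → U →L[ℝ] H)
    (Q : ℕ → H →L[ℝ] H) (R : ℕ → U →L[ℝ] U) (M : H →L[ℝ] H)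
    (hQ : MemMPlus hbar Q) (hR : MemMCoercive hbar R) (hM : IsNonnegOp M)
    (khat : ℕ) (hkhat : 1 ≤ khat)
    (P : ℕ → H →L[ℝ] H) (G : ℕ → U →L[ℝ] U)
    (hPterm : P khat = M)
    -- the backward Riccati-type recursion, with G j the inverse of R_j + B_{ν(j)}* P_j B_{ν(j)}
    (hrec : ∀ j : ℕ, 1 ≤ j → j ≤ khat →
      (G j ∘L (R j + adj (B (nu hbar j)) ∘L P j ∘L B (nu hbar j)) = 1) ∧
      ((R j + adj (B (nu hbar j)) ∘L P j ∘L B (nu hbar j)) ∘L G j = 1) ∧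
      P (j - 1) = adj (T (t j - t (j - 1))) ∘L
        (Q j + P j - P j ∘L B (nu hbar j) ∘L G j ∘L adj (B (nu hbar j)) ∘L P j) ∘L
          T (t j - t (j - 1))) :
    ∀ ℓ : ℕ, ℓ < khat → ∀ x0 : H,
      Vfin T t hbar B Q R M ℓ khat x0 = ⟪P ℓ x0, x0⟫ := by
  classical
  simp only [adj] at hrec
  have hQsa : ∀ j, 1 ≤ j → ContinuousLinearMap.adjoint (Q j) = Q j := fun j hj =>
    ContinuousLinearMap.isSelfAdjoint_iff'.mp (hQ.1 j hj).1
  have hQnn : ∀ j, 1 ≤ j → ∀ x : H, 0 ≤ ⟪Q j x, x⟫ := fun j hj => (hQ.1 j hj).2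
  have hRsa : ∀ j, 1 ≤ j → ContinuousLinearMap.adjoint (R j) = R j := fun j hj =>
    ContinuousLinearMap.isSelfAdjoint_iff'.mp (hR.1 j hj).1.1
  have hRnn : ∀ j, 1 ≤ j → ∀ v : U, 0 ≤ ⟪R j v, v⟫ := fun j hj => (hR.1 j hj).1.2
  -- self-adjointness and nonnegativity of P j for j ≤ khat, by downward induction
  have hPkey : ∀ d j, j + d = khat →
      ContinuousLinearMap.adjoint (P j) = P j ∧ ∀ x : H, 0 ≤ ⟪P j x, x⟫ := by
    intro d
    induction d with
    | zero =>
      intro j hj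
      have hjk : j = khat := by omega
      subst hjk
      rw [hPterm]
      exact ⟨ContinuousLinearMap.isSelfAdjoint_iff'.mp hM.1, hM.2⟩
    | succ d ih =>
      intro j hj
      obtain ⟨hsa, hnn⟩ := ih (j + 1) (by omega)
      obtain ⟨hG1, hG2, hrecj⟩ := hrec (j + 1) (by omega) (by omega)
      rw [Nat.add_sub_cancel] at hrecj
      have hSsa : ContinuousLinearMap.adjoint
          (R (j+1) + ContinuousLinearMap.adjoint (B (nu hbar (j+1))) ∘L P (j+1) ∘L B (nu hbar (j+1)))
          = R (j+1) + ContinuousLinearMap.adjoint (B (nu hbar (j+1))) ∘L P (j+1) ∘L B (nu hbar (j+1)) := by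
        simp only [map_add, ContinuousLinearMap.adjoint_comp, ContinuousLinearMap.adjoint_adjoint,
          hsa, hRsa (j+1) (by omega), ContinuousLinearMap.comp_assoc]
      have hGsa : ContinuousLinearMap.adjoint (G (j+1)) = G (j+1) := sa_of_inv hSsa hG1 hG2
      constructor
      · rw [hrecj]
        simp only [ContinuousLinearMap.adjoint_comp, ContinuousLinearMap.adjoint_adjoint,
          map_sub, map_add, hGsa, hsa, hQsa (j+1) (by omega), ContinuousLinearMap.comp_assoc]
      · intro x
        have hstep := lq_step (P j) (P (j+1)) (Q (j+1)) (R (j+1)) (B (nu hbar (j+1))) (G (j+1))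
          (T (t (j+1) - t j)) hsa (hRsa (j+1) (by omega)) hG2 hrecj x
          (-(G (j+1) (ContinuousLinearMap.adjoint (B (nu hbar (j+1)))
            (P (j+1) (T (t (j+1) - t j) x)))))
        rw [neg_add_cancel] at hstep
        simp only [map_zero, inner_zero_left, add_zero] at hstep
        have h1 := hQnn (j+1) (by omega) (T (t (j+1) - t j) x)
        have h2 := hRnn (j+1) (by omega) (-(G (j+1) (ContinuousLinearMap.adjoint (B (nu hbar (j+1)))
            (P (j+1) (T (t (j+1) - t j) x)))))
        have h3 := hnn (T (t (j+1) - t j) x + B (nu hbar (j+1))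
          (-(G (j+1) (ContinuousLinearMap.adjoint (B (nu hbar (j+1)))
            (P (j+1) (T (t (j+1) - t j) x))))))
        linarith
  have hPsa : ∀ j, j ≤ khat → ContinuousLinearMap.adjoint (P j) = P j :=
    fun j hj => (hPkey (khat - j) j (by omega)).1
  have hPnn : ∀ j, j ≤ khat → ∀ x : H, 0 ≤ ⟪P j x, x⟫ :=
    fun j hj => (hPkey (khat - j) j (by omega)).2
  intro ℓ hℓ x0
  -- telescoping identity
  have key : ∀ u : ℕ → U, ∀ n : ℕ, ℓ + n ≤ khat →
      (∑ m ∈ Finset.Icc 1 n,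
        (⟪Q (ℓ + m) (xtrajFrom T t hbar B ℓ x0 u m), xtrajFrom T t hbar B ℓ x0 u m⟫
          + ⟪R (ℓ + m) (u (ℓ + m)), u (ℓ + m)⟫))
        + ⟪P (ℓ + n) (xplusFrom T t hbar B ℓ x0 u n), xplusFrom T t hbar B ℓ x0 u n⟫
      = ⟪P ℓ x0, x0⟫ + ∑ m ∈ Finset.Icc 1 n,
          ⟪(R (ℓ + m) + ContinuousLinearMap.adjoint (B (nu hbar (ℓ + m))) ∘L P (ℓ + m)
              ∘L B (nu hbar (ℓ + m)))
            (u (ℓ + m) + G (ℓ + m) (ContinuousLinearMap.adjoint (B (nu hbar (ℓ + m)))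
              (P (ℓ + m) (xtrajFrom T t hbar B ℓ x0 u m)))),
           u (ℓ + m) + G (ℓ + m) (ContinuousLinearMap.adjoint (B (nu hbar (ℓ + m)))
              (P (ℓ + m) (xtrajFrom T t hbar B ℓ x0 u m)))⟫ := by
    intro u n
    induction n with
    | zero =>
      intro _
      simp [xplusFrom, Finset.Icc_eq_empty (show ¬(1:ℕ) ≤ 0 by omega)]
    | succ n ihn =>
      intro hn
      have ih := ihn (by omega)
      rw [Finset.sum_Icc_succ_top (by omega : 1 ≤ n + 1),
          Finset.sum_Icc_succ_top (by omega : 1 ≤ n + 1)]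
      simp only [← add_assoc]
      obtain ⟨hG1, hG2, hrecj⟩ := hrec (ℓ + n + 1) (by omega) (by omega)
      rw [Nat.add_sub_cancel] at hrecj
      have hstep := lq_step (P (ℓ + n)) (P (ℓ + n + 1)) (Q (ℓ + n + 1)) (R (ℓ + n + 1))
        (B (nu hbar (ℓ + n + 1))) (G (ℓ + n + 1)) (T (t (ℓ + n + 1) - t (ℓ + n)))
        (hPsa (ℓ + n + 1) (by omega)) (hRsa (ℓ + n + 1) (by omega)) hG2 hrecj
        (xplusFrom T t hbar B ℓ x0 u n) (u (ℓ + n + 1))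
      have e1 : xtrajFrom T t hbar B ℓ x0 u (n + 1)
          = T (t (ℓ + n + 1) - t (ℓ + n)) (xplusFrom T t hbar B ℓ x0 u n) := rfl
      have e2 : xplusFrom T t hbar B ℓ x0 u (n + 1)
          = T (t (ℓ + n + 1) - t (ℓ + n)) (xplusFrom T t hbar B ℓ x0 u n)
            + B (nu hbar (ℓ + n + 1)) (u (ℓ + n + 1)) := rfl
      rw [e1, e2]
      linarith
  have hJeq : ∀ u : ℕ → U, Jfin T t hbar B Q R M ℓ khat x0 u
      = ⟪P ℓ x0, x0⟫ + ∑ m ∈ Finset.Icc 1 (khat - ℓ),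
          ⟪(R (ℓ + m) + ContinuousLinearMap.adjoint (B (nu hbar (ℓ + m))) ∘L P (ℓ + m)
              ∘L B (nu hbar (ℓ + m)))
            (u (ℓ + m) + G (ℓ + m) (ContinuousLinearMap.adjoint (B (nu hbar (ℓ + m)))
              (P (ℓ + m) (xtrajFrom T t hbar B ℓ x0 u m)))),
           u (ℓ + m) + G (ℓ + m) (ContinuousLinearMap.adjoint (B (nu hbar (ℓ + m)))
              (P (ℓ + m) (xtrajFrom T t hbar B ℓ x0 u m)))⟫ := by
    intro u
    have h := key u (khat - ℓ) (by omega)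
    rw [show ℓ + (khat - ℓ) = khat from by omega, hPterm] at h
    simp only [Jfin]
    linarith
  have hterm_nn : ∀ u : ℕ → U, ∀ m ∈ Finset.Icc 1 (khat - ℓ),
      (0:ℝ) ≤ ⟪(R (ℓ + m) + ContinuousLinearMap.adjoint (B (nu hbar (ℓ + m))) ∘L P (ℓ + m)
              ∘L B (nu hbar (ℓ + m)))
            (u (ℓ + m) + G (ℓ + m) (ContinuousLinearMap.adjoint (B (nu hbar (ℓ + m)))
              (P (ℓ + m) (xtrajFrom T t hbar B ℓ x0 u m)))),
           u (ℓ + m) + G (ℓ + m) (ContinuousLinearMap.adjoint (B (nu hbar (ℓ + m)))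
              (P (ℓ + m) (xtrajFrom T t hbar B ℓ x0 u m)))⟫ := by
    intro u m hm
    simp only [Finset.mem_Icc] at hm
    set w := u (ℓ + m) + G (ℓ + m) (ContinuousLinearMap.adjoint (B (nu hbar (ℓ + m)))
      (P (ℓ + m) (xtrajFrom T t hbar B ℓ x0 u m))) with hw
    have happ : (R (ℓ + m) + ContinuousLinearMap.adjoint (B (nu hbar (ℓ + m))) ∘L P (ℓ + m)
        ∘L B (nu hbar (ℓ + m))) w
        = R (ℓ + m) w + ContinuousLinearMap.adjoint (B (nu hbar (ℓ + m)))
            (P (ℓ + m) (B (nu hbar (ℓ + m)) w)) := by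
      simp
    rw [happ, inner_add_left, ContinuousLinearMap.adjoint_inner_left]
    have h1 := hRnn (ℓ + m) (by omega) w
    have h2 := hPnn (ℓ + m) (by omega) (B (nu hbar (ℓ + m)) w)
    linarith
  have hlow : ∀ u : ℕ → U, ⟪P ℓ x0, x0⟫ ≤ Jfin T t hbar B Q R M ℓ khat x0 u := by
    intro u
    rw [hJeq u]
    have := Finset.sum_nonneg (hterm_nn u)
    linarith
  -- the optimal feedback control
  set ub : ℕ → U := fbCtrl T t hbar B P G ℓ khat x0 with hub
  have hxp : ∀ m, m ≤ khat - ℓ →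
      xplusFrom T t hbar B ℓ x0 ub m = fbState T t hbar B P G ℓ x0 m := by
    intro m
    induction m with
    | zero => intro _; rfl
    | succ m ih =>
      intro hm
      have hxm := ih (by omega)
      have hcond : ℓ + 1 ≤ ℓ + m + 1 ∧ ℓ + m + 1 ≤ khat := ⟨by omega, by omega⟩
      have hu : ub (ℓ + m + 1) = -(G (ℓ + m + 1) (ContinuousLinearMap.adjoint
          (B (nu hbar (ℓ + m + 1))) (P (ℓ + m + 1) (T (t (ℓ + m + 1) - t (ℓ + m))
            (fbState T t hbar B P G ℓ x0 m))))) := by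
        simp only [hub, fbCtrl, hcond.1, hcond.2, and_self, if_true]
        rw [show ℓ + m + 1 - (ℓ + 1) = m from by omega, show ℓ + m + 1 - 1 = ℓ + m from by omega]
      simp only [xplusFrom, hxm, hu, map_neg, fbState]
      abel
  have hW0 : ∀ m ∈ Finset.Icc 1 (khat - ℓ),
      ub (ℓ + m) + G (ℓ + m) (ContinuousLinearMap.adjoint (B (nu hbar (ℓ + m)))
        (P (ℓ + m) (xtrajFrom T t hbar B ℓ x0 ub m))) = 0 := by
    intro m hm
    simp only [Finset.mem_Icc] at hm
    obtain ⟨m, rfl⟩ : ∃ m', m = m' + 1 := ⟨m - 1, by omega⟩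
    have hxm := hxp m (by omega)
    have hcond : ℓ + 1 ≤ ℓ + m + 1 ∧ ℓ + m + 1 ≤ khat := ⟨by omega, by omega⟩
    have hu : ub (ℓ + m + 1) = -(G (ℓ + m + 1) (ContinuousLinearMap.adjoint
        (B (nu hbar (ℓ + m + 1))) (P (ℓ + m + 1) (T (t (ℓ + m + 1) - t (ℓ + m))
          (fbState T t hbar B P G ℓ x0 m))))) := by
      simp only [hub, fbCtrl, hcond.1, hcond.2, and_self, if_true]
      rw [show ℓ + m + 1 - (ℓ + 1) = m from by omega, show ℓ + m + 1 - 1 = ℓ + m from by omega]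
    have hxt : xtrajFrom T t hbar B ℓ x0 ub (m + 1)
        = T (t (ℓ + m + 1) - t (ℓ + m)) (fbState T t hbar B P G ℓ x0 m) := by
      simp only [xtrajFrom, hxm]
    simp only [show ℓ + (m + 1) = ℓ + m + 1 from by omega, hxt, hu, neg_add_cancel]
  have hJub : Jfin T t hbar B Q R M ℓ khat x0 ub = ⟪P ℓ x0, x0⟫ := by
    rw [hJeq ub]
    have hz : ∑ m ∈ Finset.Icc 1 (khat - ℓ),
        ⟪(R (ℓ + m) + ContinuousLinearMap.adjoint (B (nu hbar (ℓ + m))) ∘L P (ℓ + m)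
            ∘L B (nu hbar (ℓ + m)))
          (ub (ℓ + m) + G (ℓ + m) (ContinuousLinearMap.adjoint (B (nu hbar (ℓ + m)))
            (P (ℓ + m) (xtrajFrom T t hbar B ℓ x0 ub m)))),
         ub (ℓ + m) + G (ℓ + m) (ContinuousLinearMap.adjoint (B (nu hbar (ℓ + m)))
            (P (ℓ + m) (xtrajFrom T t hbar B ℓ x0 ub m)))⟫ = 0 := by
      refine Finset.sum_eq_zero fun m hm => ?_
      rw [hW0 m hm]
      simp
    rw [hz, add_zero]
  have hsumm : Summable (fun j : ℕ => ‖ub (ℓ + j + 1)‖ ^ 2) := by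
    refine summable_of_ne_finset_zero (s := Finset.range khat) fun j hj => ?_
    simp only [Finset.mem_range, not_lt] at hj
    have : ub (ℓ + j + 1) = 0 := by
      simp only [hub, fbCtrl]
      rw [if_neg (by omega)]
    rw [this]
    simp
  rw [Vfin]
  have hmem : ⟪P ℓ x0, x0⟫ ∈ {c : ℝ | ∃ u : ℕ → U, Summable (fun j : ℕ => ‖u (ℓ + j + 1)‖ ^ 2) ∧
      c = Jfin T t hbar B Q R M ℓ khat x0 u} := ⟨ub, hsumm, hJub.symm⟩
  have hlb : ∀ c ∈ {c : ℝ | ∃ u : ℕ → U, Summable (fun j : ℕ => ‖u (ℓ + j + 1)‖ ^ 2) ∧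
      c = Jfin T t hbar B Q R M ℓ khat x0 u}, ⟪P ℓ x0, x0⟫ ≤ c := by
    rintro c ⟨u, -, rfl⟩
    exact hlow u
  exact le_antisymm (csInf_le ⟨_, hlb⟩ hmem) (le_csInf ⟨_, hmem⟩ hlb)


end ImpulseControl
end
end

section
/- Nonnegativity of the backward Riccati operators. Let (Q_j)_{j∈ℕ⁺} ∈ M_{ħ,+}(H), (R_j)_{j∈ℕ⁺} ∈ M_{ħ,≫}(U), M ∈ SL_+(H) and k̂ ∈ ℕ⁺. Then each operator P^{k̂}_j, j = 0,1,…,k̂, produced by the backward Riccati-type recursion is a bounded self-adjoint nonnegative operator on H, i.e. P^{k̂}_j ∈ SL_+(H). -/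
open scoped RealInnerProductSpace
noncomputable section

namespace ImpulseControl

variable {H U : Type*} [NormedAddCommGroup H] [InnerProductSpace ℝ H] [CompleteSpace H]
  [NormedAddCommGroup U] [InnerProductSpace ℝ U] [CompleteSpace U]

/-- one backward Riccati step preserves nonnegativity -/
lemma riccati_step_nonneg
    {H U : Type*} [NormedAddCommGroup H] [InnerProductSpace ℝ H]
    [CompleteSpace H] [NormedAddCommGroup U] [InnerProductSpace ℝ U] [CompleteSpace U]
    (A : H →L[ℝ] H) (Bj : U →L[ℝ] H) (Qj Pj : H →L[ℝ] H) (Rj Gj : U →L[ℝ] U)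
    (hQ : IsNonnegOp Qj) (hP : IsNonnegOp Pj)
    (hRsa : IsSelfAdjoint Rj) (hRnn : ∀ u : U, 0 ≤ ⟪Rj u, u⟫)
    (hG2 : (Rj + adj Bj ∘L Pj ∘L Bj) ∘L Gj = 1) :
    IsNonnegOp (adj A ∘L (Qj + Pj - Pj ∘L Bj ∘L Gj ∘L adj Bj ∘L Pj) ∘L A) := by
  have hPsym : ∀ x y : H, ⟪Pj x, y⟫ = ⟪x, Pj y⟫ :=
    (ContinuousLinearMap.isSelfAdjoint_iff_isSymmetric.mp hP.1)
  have hQsym : ∀ x y : H, ⟪Qj x, y⟫ = ⟪x, Qj y⟫ :=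
    (ContinuousLinearMap.isSelfAdjoint_iff_isSymmetric.mp hQ.1)
  have hRsym : ∀ x y : U, ⟪Rj x, y⟫ = ⟪x, Rj y⟫ :=
    (ContinuousLinearMap.isSelfAdjoint_iff_isSymmetric.mp hRsa)
  -- S := R + B* P B is symmetric
  have hSsym : ∀ a b : U, ⟪Rj a + adj Bj (Pj (Bj a)), b⟫ = ⟪a, Rj b + adj Bj (Pj (Bj b))⟫ := by
    intro a b
    simp only [inner_add_left, inner_add_right, adj,
      ContinuousLinearMap.adjoint_inner_left, ContinuousLinearMap.adjoint_inner_right]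
    rw [hRsym, hPsym]
  -- G is symmetric
  have hSG : ∀ v : U, Rj (Gj v) + adj Bj (Pj (Bj (Gj v))) = v := by
    intro v
    have := congrArg (fun f : U →L[ℝ] U => f v) hG2
    simpa [ContinuousLinearMap.comp_apply] using this
  have hGsym : ∀ a b : U, ⟪Gj a, b⟫ = ⟪a, Gj b⟫ := by
    intro a b
    calc ⟪Gj a, b⟫ = ⟪Gj a, Rj (Gj b) + adj Bj (Pj (Bj (Gj b)))⟫ := by rw [hSG]
      _ = ⟪Rj (Gj a) + adj Bj (Pj (Bj (Gj a))), Gj b⟫ := (hSsym _ _).symm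
      _ = ⟪a, Gj b⟫ := by rw [hSG]
  constructor
  · rw [ContinuousLinearMap.isSelfAdjoint_iff_isSymmetric]
    intro x y
    simp only [ContinuousLinearMap.coe_coe, ContinuousLinearMap.comp_apply,
      ContinuousLinearMap.add_apply, ContinuousLinearMap.sub_apply, adj,
      ContinuousLinearMap.adjoint_inner_left, ContinuousLinearMap.adjoint_inner_right,
      inner_add_left, inner_add_right, inner_sub_left, inner_sub_right]
    rw [hQsym, hPsym (A x) (A y), hPsym _ (A y),
      ← ContinuousLinearMap.adjoint_inner_right Bj, hGsym,
      ContinuousLinearMap.adjoint_inner_left, hPsym (A x)]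
  · intro x
    simp only [ContinuousLinearMap.comp_apply, ContinuousLinearMap.add_apply,
      ContinuousLinearMap.sub_apply, adj, ContinuousLinearMap.adjoint_inner_left,
      inner_add_left, inner_sub_left]
    set y := A x with hy
    set u := Gj (ContinuousLinearMap.adjoint Bj (Pj y)) with hu
    have hSu : Rj u + ContinuousLinearMap.adjoint Bj (Pj (Bj u))
        = ContinuousLinearMap.adjoint Bj (Pj y) := hSG _
    have h1 : ⟪Pj (Bj u), y⟫ = ⟪Rj u, u⟫ + ⟪Pj (Bj u), Bj u⟫ := by
      calc ⟪Pj (Bj u), y⟫ = ⟪Bj u, Pj y⟫ := hPsym _ _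
        _ = ⟪u, ContinuousLinearMap.adjoint Bj (Pj y)⟫ := by
            rw [ContinuousLinearMap.adjoint_inner_right]
        _ = ⟪u, Rj u + ContinuousLinearMap.adjoint Bj (Pj (Bj u))⟫ := by rw [hSu]
        _ = ⟪Rj u, u⟫ + ⟪Pj (Bj u), Bj u⟫ := by
            rw [inner_add_right, ContinuousLinearMap.adjoint_inner_right,
              real_inner_comm u (Rj u), hPsym (Bj u)]
    have h2 : ⟪Pj y, Bj u⟫ = ⟪Pj (Bj u), y⟫ := by
      rw [hPsym, real_inner_comm]
    have h3 : (0:ℝ) ≤ ⟪Pj (y - Bj u), y - Bj u⟫ := hP.2 _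
    have h3' : (0:ℝ) ≤ ⟪Pj y, y⟫ - ⟪Pj y, Bj u⟫ - ⟪Pj (Bj u), y⟫ + ⟪Pj (Bj u), Bj u⟫ := by
      have : ⟪Pj (y - Bj u), y - Bj u⟫
          = ⟪Pj y, y⟫ - ⟪Pj y, Bj u⟫ - ⟪Pj (Bj u), y⟫ + ⟪Pj (Bj u), Bj u⟫ := by
        rw [map_sub]; rw [inner_sub_left, inner_sub_right, inner_sub_right]; ring
      linarith [h3, this ▸ h3]
    have h4 := hRnn u
    have h5 := hQ.2 y
    linarith

/-- Corollary 2.3: the operators produced by the backward Riccati-type recursion are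
bounded, self-adjoint and nonnegative. -/
theorem backward_riccati_nonneg
    {H U : Type*} [NormedAddCommGroup H] [InnerProductSpace ℝ H]
    [CompleteSpace H] [NormedAddCommGroup U] [InnerProductSpace ℝ U] [CompleteSpace U]
    (T : ℝ → H →L[ℝ] H) (hT0 : T 0 = 1)
    (hTadd : ∀ a b : ℝ, 0 ≤ a → 0 ≤ b → T (a + b) = T a ∘L T b)
    (hTcont : ∀ x : H, ContinuousOn (fun τ : ℝ => T τ x) (Set.Ici (0 : ℝ)))
    (hbar : ℕ) (hhbar : 0 < hbar)
    (t : ℕ → ℝ) (ht0 : t 0 = 0) (htmono : StrictMono t)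
    (htper : ∀ j : ℕ, t (j + hbar) = t j + t hbar)
    (B : ℕ → U →L[ℝ] H)
    (Q : ℕ → H →L[ℝ] H) (R : ℕ → U →L[ℝ] U) (M : H →L[ℝ] H)
    (hQ : MemMPlus hbar Q) (hR : MemMCoercive hbar R) (hM : IsNonnegOp M)
    (khat : ℕ) (hkhat : 1 ≤ khat)
    (P : ℕ → H →L[ℝ] H) (G : ℕ → U →L[ℝ] U)
    (hPterm : P khat = M)
    (hrec : ∀ j : ℕ, 1 ≤ j → j ≤ khat →
      (G j ∘L (R j + adj (B (nu hbar j)) ∘L P j ∘L B (nu hbar j)) = 1) ∧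
      ((R j + adj (B (nu hbar j)) ∘L P j ∘L B (nu hbar j)) ∘L G j = 1) ∧
      P (j - 1) = adj (T (t j - t (j - 1))) ∘L
        (Q j + P j - P j ∘L B (nu hbar j) ∘L G j ∘L adj (B (nu hbar j)) ∘L P j) ∘L
          T (t j - t (j - 1))) :
    ∀ j : ℕ, j ≤ khat → IsNonnegOp (P j) := by
  have key : ∀ d : ℕ, d ≤ khat → IsNonnegOp (P (khat - d)) := by
    intro d
    induction d with
    | zero => intro _; simpa [hPterm] using hM
    | succ n ih =>
      intro hle
      have hn : n ≤ khat := by omega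
      set j := khat - n with hj
      have hj1 : 1 ≤ j := by omega
      have hjk : j ≤ khat := by omega
      have hPj := ih hn
      obtain ⟨hG1, hG2, hrec'⟩ := hrec j hj1 hjk
      have hidx : khat - (n + 1) = j - 1 := by omega
      rw [hidx, hrec']
      obtain ⟨⟨hRsa, hRnn⟩, -⟩ := hR.1 j hj1
      exact riccati_step_nonneg _ _ _ _ _ _ (hQ.1 j hj1) hPj hRsa hRnn hG2
  intro j hj
  have := key (khat - j) (Nat.sub_le _ _)
  rwa [Nat.sub_sub_self hj] at this

end ImpulseControl
end
end

section
/- Nonemptiness of the shifted admissible sets. Assume U_ad(x_0) ≠ ∅ for every x_0 ∈ H. Then for every ℓ ∈ ℕ and every x_0 ∈ H, the shifted admissible set U_ad(x_0;ℓ) is nonempty. -/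
open scoped RealInnerProductSpace
noncomputable section

namespace ImpulseControl

variable {H U : Type*} [NormedAddCommGroup H] [InnerProductSpace ℝ H] [CompleteSpace H]
  [NormedAddCommGroup U] [InnerProductSpace ℝ U] [CompleteSpace U]

/-- post-impulse states only depend on the controls at the impulse instants used so far -/
lemma xplusFrom_congr' {H U : Type*} [NormedAddCommGroup H] [InnerProductSpace ℝ H]
    [NormedAddCommGroup U] [InnerProductSpace ℝ U]
    (T : ℝ → H →L[ℝ] H) (t : ℕ → ℝ) (hbar : ℕ) (B : ℕ → U →L[ℝ] H)
    (ℓ : ℕ) (x0 : H) (u u' : ℕ → U) :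
    ∀ m : ℕ, (∀ i, 1 ≤ i → i ≤ m → u (ℓ + i) = u' (ℓ + i)) →
      xplusFrom T t hbar B ℓ x0 u m = xplusFrom T t hbar B ℓ x0 u' m := by
  intro m
  induction m with
  | zero => intro _; rfl
  | succ m ih =>
    intro h
    simp only [xplusFrom]
    rw [ih (fun i h1 h2 => h i h1 (h2.trans (Nat.le_succ m)))]
    congr 1
    exact congrArg _ (h (m + 1) (Nat.le_add_left 1 m) le_rfl)

/-- Lemma 2.4: if `U_ad(x0)` is nonempty for every `x0`, then so is every shifted
admissible set `U_ad(x0; ℓ)`. -/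
theorem shifted_admissible_nonempty
    {H U : Type*} [NormedAddCommGroup H] [InnerProductSpace ℝ H]
    [CompleteSpace H] [NormedAddCommGroup U] [InnerProductSpace ℝ U] [CompleteSpace U]
    (T : ℝ → H →L[ℝ] H) (hT0 : T 0 = 1)
    (hTadd : ∀ a b : ℝ, 0 ≤ a → 0 ≤ b → T (a + b) = T a ∘L T b)
    (hTcont : ∀ x : H, ContinuousOn (fun τ : ℝ => T τ x) (Set.Ici (0 : ℝ)))
    (hbar : ℕ) (hhbar : 0 < hbar)
    (t : ℕ → ℝ) (ht0 : t 0 = 0) (htmono : StrictMono t)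
    (htper : ∀ j : ℕ, t (j + hbar) = t j + t hbar)
    (B : ℕ → U →L[ℝ] H)
    (hAd : ∀ x0 : H, (UadFrom T t hbar B 0 x0).Nonempty) :
    ∀ (ℓ : ℕ) (x0 : H), (UadFrom T t hbar B ℓ x0).Nonempty := by
  intro ℓ x0
  set k : ℕ := hbar * (ℓ + 1) with hkdef
  have hℓk : ℓ + 1 ≤ k := by
    rw [hkdef]
    exact Nat.le_mul_of_pos_left _ hhbar
  set d : ℕ := k - ℓ with hddef
  have hkd : ℓ + d = k := by omega
  set y : H := xplusFrom T t hbar B ℓ x0 (fun _ => 0) d with hydef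
  obtain ⟨v, hv1, hv2⟩ := hAd y
  set u : ℕ → U := fun j => if k < j then v (j - k) else 0 with hudef
  have tmul : ∀ (n j : ℕ), t (j + hbar * n) = t j + n * t hbar := by
    intro n
    induction n with
    | zero => intro j; simp
    | succ n ih =>
      intro j
      have h : j + hbar * (n + 1) = (j + hbar * n) + hbar := by ring
      rw [h, htper, ih]
      push_cast
      ring
  have gap : ∀ m : ℕ, t (k + (m + 1)) - t (k + m) = t (m + 1) - t m := by
    intro m
    have h1 : k + (m + 1) = (m + 1) + hbar * (ℓ + 1) := by rw [hkdef]; ring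
    have h2 : k + m = m + hbar * (ℓ + 1) := by rw [hkdef]; ring
    rw [h1, h2, tmul, tmul]
    ring
  have hnu : ∀ m : ℕ, nu hbar (k + m) = nu hbar m := by
    intro m
    have h : k + m = m + hbar * (ℓ + 1) := by rw [hkdef]; ring
    rw [h]
    simp [nu, Nat.add_mul_mod_self_left]
  have hu0 : ∀ i, i ≤ k → u i = 0 := by
    intro i hi
    simp only [hudef]
    rw [if_neg (by omega)]
  have hbase : xplusFrom T t hbar B ℓ x0 u d = y := by
    rw [hydef]
    exact xplusFrom_congr' T t hbar B ℓ x0 u (fun _ => 0) d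
      (fun i h1 h2 => hu0 (ℓ + i) (by omega))
  have key : ∀ m : ℕ, xplusFrom T t hbar B ℓ x0 u (d + m)
      = xplusFrom T t hbar B 0 y v m := by
    intro m
    induction m with
    | zero => simpa only [Nat.add_zero, xplusFrom] using hbase
    | succ m ih =>
      have hueq : u (k + (m + 1)) = v (m + 1) := by
        simp only [hudef]
        rw [if_pos (by omega)]
        congr 1
        omega
      rw [show d + (m + 1) = (d + m) + 1 from rfl]
      simp only [xplusFrom, Nat.zero_add]
      rw [show ℓ + (d + m) + 1 = k + (m + 1) from by omega,
          show ℓ + (d + m) = k + m from by omega,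
          ih, gap m, hnu (m + 1), hueq]
  have keyx : ∀ m : ℕ, xtrajFrom T t hbar B ℓ x0 u ((d + m) + 1)
      = xtrajFrom T t hbar B 0 y v (m + 1) := by
    intro m
    simp only [xtrajFrom, Nat.zero_add]
    rw [show ℓ + (d + m) + 1 = k + (m + 1) from by omega,
        show ℓ + (d + m) = k + m from by omega, key m, gap m]
  refine ⟨u, ?_, ?_⟩
  · refine (summable_nat_add_iff (f := fun j : ℕ => ‖u (ℓ + j + 1)‖ ^ 2) d).mp ?_
    have h : ∀ j : ℕ, u (ℓ + (j + d) + 1) = v (0 + j + 1) := by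
      intro j
      simp only [hudef]
      rw [if_pos (by omega)]
      congr 1
      omega
    simpa only [h] using hv1
  · refine (summable_nat_add_iff
      (f := fun j : ℕ => ‖xtrajFrom T t hbar B ℓ x0 u (j + 1)‖ ^ 2) d).mp ?_
    have h : ∀ j : ℕ, xtrajFrom T t hbar B ℓ x0 u ((j + d) + 1)
        = xtrajFrom T t hbar B 0 y v (j + 1) := by
      intro j
      rw [show j + d = d + j from Nat.add_comm j d]
      exact keyx j
    simpa only [h] using hv2

end ImpulseControl
end
end
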